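/- arXiv:1805.11341 — 8 statements merged into one kernel-verified Lean document; each statement's English description precedes it below -/
import Mathlib

section
/- Let F, M, H be finite nonempty types and let Υ : Matrix (F × M × H) (F × M × H) ℂ be a nonzero positive semidefinite matrix. Then the following are equivalent: (i) for every positive semidefinite matrix O : Matrix M M ℂ there exist matrices A : Matrix F F ℂ and B : Matrix H H ℂ such that the conditional operator Υ_O equals A ⊗ B; (ii) either there exist matrices Φ : Matrix F F ℂ and Ψ : Matrix (M × H) (M × H) ℂ with Υ((f,m,h),(f',m',h')) = Φ f f' * Ψ (m,h) (m',h') for all indices, or there exist matrices Φ : Matrix (F × M) (F × M) ℂ and Ψ : Matrix H H ℂ with Υ((f,m,h),(f',m',h')) = Φ (f,m) (f',m') * Ψ h h' for all indices. In words: the only positive semidefinite operators whose conditional operators are product operators for all possible instrument elements on M are those where the M subsystem is in tensor product with F or with H (or both). -/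
open Matrix Kronecker ComplexOrder

/-- The conditional operator `Υ_O` on `F × H`, obtained from a tripartite operator `Υ`
on `F × M × H` and an instrument element `O` on `M` by taking the partial trace over `M`
of `(1_F ⊗ O ⊗ 1_H) · Υ`. -/
noncomputable def condOp {F M H : Type} [Fintype M]
    (Υ : Matrix (F × M × H) (F × M × H) ℂ) (O : Matrix M M ℂ) :
    Matrix (F × H) (F × H) ℂ :=
  fun p q => ∑ m : M, ∑ m' : M, O m m' * Υ (p.1, m', p.2) (q.1, m, q.2)


private lemma prop_vec {τ : Type} {u w : τ → ℂ} {p₀ : τ} (h₀ : u p₀ ≠ 0)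
    (h : ∀ p p', w p * u p' = u p * w p') (p : τ) : w p = w p₀ / u p₀ * u p := by
  have h1 := h p p₀
  field_simp
  linear_combination h1

private lemma core {R C ι : Type} (g : ι → R → C → ℂ)
    (h1 : ∀ i p p' q q', g i p q * g i p' q' = g i p q' * g i p' q)
    (hX : ∀ i j p p' q q',
      g i p q * g j p' q' + g j p q * g i p' q'
        = g i p q' * g j p' q + g j p q' * g i p' q) :
    (∃ u : R → ℂ, ∀ i, ∃ v : C → ℂ, ∀ p q, g i p q = u p * v q) ∨
    (∃ v : C → ℂ, ∀ i, ∃ u : R → ℂ, ∀ p q, g i p q = u p * v q) := by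
  by_cases hz : ∀ i p q, g i p q = 0
  · exact Or.inl ⟨fun _ => 0, fun i => ⟨fun _ => 0, fun p q => by simp [hz]⟩⟩
  push_neg at hz
  obtain ⟨i₀, p₀, q₀, h₀⟩ := hz
  -- u₀, v₀
  have ha : ∀ p q, g i₀ p q = g i₀ p q₀ * (g i₀ p₀ q / g i₀ p₀ q₀) := by
    intro p q
    have h2 := h1 i₀ p p₀ q q₀
    field_simp
    linear_combination h2
  have hv₀ : g i₀ p₀ q₀ / g i₀ p₀ q₀ = 1 := div_self h₀
  -- decomposition of each g j
  have hdec : ∀ j p q, g j p q = g j p q₀ * (g i₀ p₀ q / g i₀ p₀ q₀)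
      + g i₀ p q₀ * ((g j p₀ q - g j p₀ q₀ * (g i₀ p₀ q / g i₀ p₀ q₀)) / g i₀ p₀ q₀) := by
    intro j p q
    have hx := hX i₀ j p₀ p q₀ q
    rw [ha p₀ q₀, ha p₀ q, ha p q₀, ha p q, hv₀, mul_one] at hx
    field_simp at hx ⊢
    linear_combination hx
  -- separation
  have hsep : ∀ j p p' q q',
      (g j p q₀ * g i₀ p' q₀ - g i₀ p q₀ * g j p' q₀)
        * ((g i₀ p₀ q / g i₀ p₀ q₀) * ((g j p₀ q' - g j p₀ q₀ * (g i₀ p₀ q' / g i₀ p₀ q₀)) / g i₀ p₀ q₀)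
          - (g i₀ p₀ q' / g i₀ p₀ q₀) * ((g j p₀ q - g j p₀ q₀ * (g i₀ p₀ q / g i₀ p₀ q₀)) / g i₀ p₀ q₀)) = 0 := by
    intro j p p' q q'
    have h2 := h1 j p p' q q'
    rw [hdec j p q, hdec j p' q', hdec j p q', hdec j p' q] at h2
    linear_combination h2
  -- classification of each j
  have hclass : ∀ j, (∃ v : C → ℂ, ∀ p q, g j p q = g i₀ p q₀ * v q)
      ∨ (∀ p q, g j p q = g j p q₀ * (g i₀ p₀ q / g i₀ p₀ q₀)) := by
    intro j
    by_cases hC : ∀ p p', g j p q₀ * g i₀ p' q₀ = g i₀ p q₀ * g j p' q₀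
    · left
      refine ⟨fun q => g j p₀ q₀ / g i₀ p₀ q₀ * (g i₀ p₀ q / g i₀ p₀ q₀)
        + (g j p₀ q - g j p₀ q₀ * (g i₀ p₀ q / g i₀ p₀ q₀)) / g i₀ p₀ q₀, fun p q => ?_⟩
      have hCp : g j p q₀ = g j p₀ q₀ / g i₀ p₀ q₀ * g i₀ p q₀ := prop_vec (u := fun p => g i₀ p q₀) (w := fun p => g j p q₀) (p₀ := p₀) h₀ hC p
      rw [hdec j p q, hCp]
      ring
    · right
      push_neg at hC
      obtain ⟨p, p', hpp⟩ := hC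
      have hvq : ∀ q, (g j p₀ q - g j p₀ q₀ * (g i₀ p₀ q / g i₀ p₀ q₀)) / g i₀ p₀ q₀ = 0 := by
        intro q
        have h3 := hsep j p p' q q₀
        rcases mul_eq_zero.mp h3 with h' | h'
        · exact ((sub_ne_zero.mpr hpp) h').elim
        · rw [hv₀] at h'
          simpa using h'
      intro p'' q
      rw [hdec j p'' q, hvq q, mul_zero, add_zero]
  -- final dichotomy
  by_cases hL : ∀ j, ∃ v : C → ℂ, ∀ p q, g j p q = g i₀ p q₀ * v q
  · exact Or.inl ⟨fun p => g i₀ p q₀, hL⟩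
  by_cases hR : ∀ j, ∃ u : R → ℂ, ∀ p q, g j p q = u p * (g i₀ p₀ q / g i₀ p₀ q₀)
  · exact Or.inr ⟨fun q => g i₀ p₀ q / g i₀ p₀ q₀, hR⟩
  exfalso
  rw [not_forall] at hL hR
  obtain ⟨j₁, hj₁⟩ := hL
  obtain ⟨j₂, hj₂⟩ := hR
  have hj₁r : ∀ p q, g j₁ p q = g j₁ p q₀ * (g i₀ p₀ q / g i₀ p₀ q₀) := by
    rcases hclass j₁ with h | h
    · exact (hj₁ h).elim
    · exact h
  have hj₂l : ∃ v : C → ℂ, ∀ p q, g j₂ p q = g i₀ p q₀ * v q := by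
    rcases hclass j₂ with h | h
    · exact h
    · exact (hj₂ ⟨fun p => g j₂ p q₀, h⟩).elim
  obtain ⟨v₂, hv₂⟩ := hj₂l
  have hcross : ∀ p p' q q',
      (g j₁ p q₀ * g i₀ p' q₀ - g i₀ p q₀ * g j₁ p' q₀)
        * ((g i₀ p₀ q / g i₀ p₀ q₀) * v₂ q' - v₂ q * (g i₀ p₀ q' / g i₀ p₀ q₀)) = 0 := by
    intro p p' q q'
    have h2 := hX j₁ j₂ p p' q q'
    rw [hj₁r p q, hj₁r p' q', hj₁r p q', hj₁r p' q, hv₂ p q, hv₂ p' q', hv₂ p q', hv₂ p' q] at h2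
    linear_combination h2
  by_cases hu : ∀ p p', g j₁ p q₀ * g i₀ p' q₀ = g i₀ p q₀ * g j₁ p' q₀
  · have hprop : ∀ p, g j₁ p q₀ = g j₁ p₀ q₀ / g i₀ p₀ q₀ * g i₀ p q₀ := prop_vec (u := fun p => g i₀ p q₀) (w := fun p => g j₁ p q₀) (p₀ := p₀) h₀ hu
    exact hj₁ ⟨fun q => g j₁ p₀ q₀ / g i₀ p₀ q₀ * (g i₀ p₀ q / g i₀ p₀ q₀),
      fun p q => by rw [hj₁r p q, hprop p]; ring⟩
  · push_neg at hu
    obtain ⟨p, p', hpp⟩ := hu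
    have hv : ∀ q q', v₂ q * (g i₀ p₀ q' / g i₀ p₀ q₀) = (g i₀ p₀ q / g i₀ p₀ q₀) * v₂ q' := by
      intro q q'
      have h3 := hcross p p' q q'
      rcases mul_eq_zero.mp h3 with h' | h'
      · exact ((sub_ne_zero.mpr hpp) h').elim
      · exact (sub_eq_zero.mp h').symm
    have hv0ne : g i₀ p₀ q₀ / g i₀ p₀ q₀ ≠ 0 := by rw [div_self h₀]; exact one_ne_zero
    have hprop : ∀ q, v₂ q = v₂ q₀ / (g i₀ p₀ q₀ / g i₀ p₀ q₀) * (g i₀ p₀ q / g i₀ p₀ q₀) := prop_vec (u := fun q => g i₀ p₀ q / g i₀ p₀ q₀) (w := v₂) (p₀ := q₀) hv0ne hv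
    exact hj₂ ⟨fun p => g i₀ p q₀ * (v₂ q₀ / (g i₀ p₀ q₀ / g i₀ p₀ q₀)),
      fun p q => by rw [hv₂ p q, hprop q]; ring⟩

private def Pmat {n : Type} (x : n → ℂ) : Matrix n n ℂ :=
  Matrix.of fun i j => x i * (starRingEnd ℂ) (x j)

private lemma pmat_psd {n : Type} [Fintype n] (x : n → ℂ) : (Pmat x).PosSemidef := by
  have h : Pmat x = (Matrix.of fun (_ : Unit) j => (starRingEnd ℂ) (x j))ᴴ
      * (Matrix.of fun (_ : Unit) j => (starRingEnd ℂ) (x j)) := by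
    ext i j
    simp [Pmat, Matrix.mul_apply, Matrix.conjTranspose_apply]
  rw [h]
  exact posSemidef_conjTranspose_mul_self _

private lemma std_decomp {n : Type} [DecidableEq n] (a b : n) :
    Matrix.single a b (1:ℂ)
      = (4:ℂ)⁻¹ • (Pmat (fun i => (if a = i then 1 else 0) + 1 * (if b = i then 1 else 0))
          + Complex.I • Pmat (fun i => (if a = i then 1 else 0) + Complex.I * (if b = i then 1 else 0))
          - Pmat (fun i => (if a = i then 1 else 0) + (-1) * (if b = i then 1 else 0))
          - Complex.I • Pmat (fun i => (if a = i then 1 else 0) + (-Complex.I) * (if b = i then 1 else 0))) := by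
  ext i j
  have hsplit : (if a = i ∧ b = j then (1:ℂ) else 0)
      = (if a = i then (1:ℂ) else 0) * (if b = j then (1:ℂ) else 0) := by
    split_ifs <;> norm_num <;> tauto
  simp only [Matrix.single, Pmat, Matrix.of_apply, Matrix.smul_apply, Matrix.add_apply,
    Matrix.sub_apply, map_add, _root_.map_mul, _root_.map_one, map_neg, Complex.conj_I,
    smul_eq_mul, apply_ite (starRingEnd ℂ), map_zero, hsplit]
  set s := (if a = i then (1:ℂ) else 0)
  set t := (if b = i then (1:ℂ) else 0)
  set σ := (if a = j then (1:ℂ) else 0)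
  set τ := (if b = j then (1:ℂ) else 0)
  linear_combination ((s*τ - t*σ)/2 : ℂ) * Complex.I_sq

private lemma psd_vanish {n : Type} [Fintype n] [DecidableEq n] (f : Matrix n n ℂ → ℂ)
    (hadd : ∀ X Y, f (X + Y) = f X + f Y) (hsmul : ∀ (c : ℂ) X, f (c • X) = c * f X)
    (hpsd : ∀ P : Matrix n n ℂ, P.PosSemidef → f P = 0) (O : Matrix n n ℂ) : f O = 0 := by
  let L : Matrix n n ℂ →ₗ[ℂ] ℂ :=
    { toFun := f, map_add' := hadd, map_smul' := by simp [hsmul, smul_eq_mul] }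
  have hP : ∀ x : n → ℂ, L (Pmat x) = 0 := fun x => hpsd _ (pmat_psd x)
  have hstd : ∀ a b : n, L (Matrix.single a b 1) = 0 := by
    intro a b
    rw [std_decomp a b]
    simp only [_root_.map_smul, map_add, map_sub, hP, smul_eq_mul]
    ring
  show L O = 0
  rw [matrix_eq_sum_single O, map_sum]
  refine Finset.sum_eq_zero fun a _ => ?_
  rw [map_sum]
  refine Finset.sum_eq_zero fun b _ => ?_
  have h1 : Matrix.single a b (O a b) = O a b • Matrix.single a b 1 := by
    rw [smul_single]
    simp
  rw [h1, _root_.map_smul, hstd, smul_zero]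
private noncomputable def entryL {F M H : Type} [Fintype M]
    (Υ : Matrix (F × M × H) (F × M × H) ℂ) (p : F × F) (q : H × H) :
    Matrix M M ℂ →ₗ[ℂ] ℂ where
  toFun O := ∑ m : M, ∑ m' : M, O m m' * Υ (p.1, m', q.1) (p.2, m, q.2)
  map_add' O O' := by
    simp [Matrix.add_apply, add_mul, Finset.sum_add_distrib]
  map_smul' c O := by
    simp only [Matrix.smul_apply, smul_eq_mul, RingHom.id_apply, Finset.mul_sum, mul_assoc]

theorem stmt_1 {F M H : Type} [Fintype F] [Fintype M] [Fintype H]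
    [Nonempty F] [Nonempty M] [Nonempty H]
    [DecidableEq F] [DecidableEq M] [DecidableEq H]
    (Υ : Matrix (F × M × H) (F × M × H) ℂ)
    (hΥ_ne : Υ ≠ 0) (hΥ_psd : Υ.PosSemidef) :
    (∀ O : Matrix M M ℂ, O.PosSemidef →
        ∃ (A : Matrix F F ℂ) (B : Matrix H H ℂ), condOp Υ O = A ⊗ₖ B)
      ↔
    ((∃ (Φ : Matrix F F ℂ) (Ψ : Matrix (M × H) (M × H) ℂ),
        ∀ f m h f' m' h', Υ (f, m, h) (f', m', h') = Φ f f' * Ψ (m, h) (m', h')) ∨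
     (∃ (Φ : Matrix (F × M) (F × M) ℂ) (Ψ : Matrix H H ℂ),
        ∀ f m h f' m' h', Υ (f, m, h) (f', m', h') = Φ (f, m) (f', m') * Ψ h h')) := by
  constructor
  · intro hyp
    have hpsd : ∀ O : Matrix M M ℂ, O.PosSemidef → ∀ (p p' : F × F) (q q' : H × H),
        entryL Υ p q O * entryL Υ p' q' O = entryL Υ p q' O * entryL Υ p' q O := by
      intro O hO p p' q q'
      obtain ⟨A, B, hAB⟩ := hyp O hO
      have hG : ∀ (p : F × F) (q : H × H), entryL Υ p q O = A p.1 p.2 * B q.1 q.2 := by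
        intro p q
        have h1 : entryL Υ p q O = condOp Υ O (p.1, q.1) (p.2, q.2) := rfl
        rw [h1, hAB]
        simp [kroneckerMap_apply]
      rw [hG, hG, hG, hG]; ring
    have hall : ∀ (O : Matrix M M ℂ) (p p' : F × F) (q q' : H × H),
        entryL Υ p q O * entryL Υ p' q' O = entryL Υ p q' O * entryL Υ p' q O := by
      intro O p p' q q'
      have hS1 : ∀ O1 : Matrix M M ℂ, O1.PosSemidef → ∀ O2 : Matrix M M ℂ, O2.PosSemidef →
          entryL Υ p q O1 * entryL Υ p' q' O2 + entryL Υ p q O2 * entryL Υ p' q' O1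
            - entryL Υ p q' O1 * entryL Υ p' q O2 - entryL Υ p q' O2 * entryL Υ p' q O1 = 0 := by
        intro O1 h1 O2 h2
        have ha := hpsd O1 h1 p p' q q'
        have hb := hpsd O2 h2 p p' q q'
        have hc := hpsd (O1 + O2) (h1.add h2) p p' q q'
        simp only [map_add] at hc
        linear_combination hc - ha - hb
      have hS2 : ∀ O1 : Matrix M M ℂ, O1.PosSemidef → ∀ O2 : Matrix M M ℂ,
          entryL Υ p q O1 * entryL Υ p' q' O2 + entryL Υ p q O2 * entryL Υ p' q' O1
            - entryL Υ p q' O1 * entryL Υ p' q O2 - entryL Υ p q' O2 * entryL Υ p' q O1 = 0 := by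
        intro O1 h1 O2
        refine psd_vanish _ ?_ ?_ (hS1 O1 h1) O2
        · intro X Y; simp only [map_add]; ring
        · intro c X; simp only [_root_.map_smul, smul_eq_mul]; ring
      have hS3 : entryL Υ p q O * entryL Υ p' q' O + entryL Υ p q O * entryL Υ p' q' O
          - entryL Υ p q' O * entryL Υ p' q O - entryL Υ p q' O * entryL Υ p' q O = 0 :=
        psd_vanish (fun O1 => entryL Υ p q O1 * entryL Υ p' q' O + entryL Υ p q O * entryL Υ p' q' O1
            - entryL Υ p q' O1 * entryL Υ p' q O - entryL Υ p q' O * entryL Υ p' q O1)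
          (by intro X Y; simp only [map_add]; ring)
          (by intro c X; simp only [_root_.map_smul, smul_eq_mul]; ring)
          (fun P hP => hS2 P hP O) O
      linear_combination hS3 / 2
    have hconn : ∀ (i : M × M) (p : F × F) (q : H × H),
        entryL Υ p q (Matrix.single i.1 i.2 1) = Υ (p.1, i.2, q.1) (p.2, i.1, q.2) := by
      intro i p q
      simp [entryL, Matrix.single, ite_and, Finset.sum_ite_eq, Finset.mem_univ]
    have h1c : ∀ (i : M × M) (p p' : F × F) (q q' : H × H),
        Υ (p.1, i.2, q.1) (p.2, i.1, q.2) * Υ (p'.1, i.2, q'.1) (p'.2, i.1, q'.2)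
          = Υ (p.1, i.2, q'.1) (p.2, i.1, q'.2) * Υ (p'.1, i.2, q.1) (p'.2, i.1, q.2) := by
      intro i p p' q q'
      have h0 := hall (Matrix.single i.1 i.2 1) p p' q q'
      simpa only [hconn] using h0
    have hXc : ∀ (i j : M × M) (p p' : F × F) (q q' : H × H),
        Υ (p.1, i.2, q.1) (p.2, i.1, q.2) * Υ (p'.1, j.2, q'.1) (p'.2, j.1, q'.2)
          + Υ (p.1, j.2, q.1) (p.2, j.1, q.2) * Υ (p'.1, i.2, q'.1) (p'.2, i.1, q'.2)
          = Υ (p.1, i.2, q'.1) (p.2, i.1, q'.2) * Υ (p'.1, j.2, q.1) (p'.2, j.1, q.2)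
          + Υ (p.1, j.2, q'.1) (p.2, j.1, q'.2) * Υ (p'.1, i.2, q.1) (p'.2, i.1, q.2) := by
      intro i j p p' q q'
      have h3 := hall (Matrix.single i.1 i.2 1 + Matrix.single j.1 j.2 1) p p' q q'
      simp only [map_add, hconn] at h3
      have hi := hall (Matrix.single i.1 i.2 1) p p' q q'
      simp only [hconn] at hi
      have hj := hall (Matrix.single j.1 j.2 1) p p' q q'
      simp only [hconn] at hj
      linear_combination h3 - hi - hj
    rcases core (fun (i : M × M) (p : F × F) (q : H × H) => Υ (p.1, i.2, q.1) (p.2, i.1, q.2))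
        h1c hXc with ⟨u, hu⟩ | ⟨v, hv⟩
    · left
      choose v hv using hu
      refine ⟨Matrix.of fun f f' => u (f, f'), Matrix.of fun x y => v (y.1, x.1) (x.2, y.2), ?_⟩
      intro f m h f' m' h'
      have h0 := hv (m', m) (f, f') (h, h')
      simpa using h0
    · right
      choose u hu using hv
      refine ⟨Matrix.of fun x y => u (y.2, x.2) (x.1, y.1), Matrix.of fun h h' => v (h, h'), ?_⟩
      intro f m h f' m' h'
      have h0 := hu (m', m) (f, f') (h, h')
      simpa using h0
  · rintro (⟨Φ, Ψ, hfac⟩ | ⟨Φ, Ψ, hfac⟩) O hO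
    · refine ⟨Φ, Matrix.of fun h h' => ∑ m : M, ∑ m' : M, O m m' * Ψ (m', h) (m, h'), ?_⟩
      ext ⟨f, hh⟩ ⟨f', hh'⟩
      show (∑ m : M, ∑ m' : M, O m m' * Υ (f, m', hh) (f', m, hh')) = _
      simp only [kroneckerMap_apply, Matrix.of_apply]
      simp_rw [hfac, Finset.mul_sum]
      refine Finset.sum_congr rfl fun m _ => Finset.sum_congr rfl fun m' _ => by ring
    · refine ⟨Matrix.of fun f f' => ∑ m : M, ∑ m' : M, O m m' * Φ (f, m') (f', m), Ψ, ?_⟩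
      ext ⟨f, hh⟩ ⟨f', hh'⟩
      show (∑ m : M, ∑ m' : M, O m m' * Υ (f, m', hh) (f', m, hh')) = _
      simp only [kroneckerMap_apply, Matrix.of_apply]
      simp_rw [hfac, Finset.sum_mul]
      refine Finset.sum_congr rfl fun m _ => Finset.sum_congr rfl fun m' _ => by ring
end

section
/- Let V and W be finite-dimensional vector spaces over ℂ, let X be a finite type, and let v : X → V and w : X → W be families of vectors. Suppose that for every choice of coefficients c : X → ℂ there exist vectors v' ∈ V and w' ∈ W such that Σ_{x} c x • (v x ⊗ w x) = v' ⊗ w' in V ⊗ W (i.e., every linear combination of the simple tensors v x ⊗ w x is itself a simple tensor). Then either there exists v₀ ∈ V such that for every x there is u_x ∈ W with v x ⊗ w x = v₀ ⊗ u_x, or there exists w₀ ∈ W such that for every x there is u_x ∈ V with v x ⊗ w x = u_x ⊗ w₀. -/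
open TensorProduct

lemma dual_pair {V : Type} [AddCommGroup V] [Module ℂ V] {x y : V}
    (hxy : LinearIndependent ℂ ![x, y]) :
    ∃ f g : V →ₗ[ℂ] ℂ, f x = 1 ∧ f y = 0 ∧ g x = 0 ∧ g y = 1 := by
  have hne : x ≠ y := fun h => by
    have := hxy.injective (show ![x, y] 0 = ![x, y] 1 by simp [h])
    simp at this
  have hs : LinearIndepOn ℂ id ({x, y} : Set V) := by
    refine hxy.linearIndepOn_id' ?_
    simp [Matrix.range_cons, Matrix.range_empty, Set.pair_comm y x]
  classical
  let b := Module.Basis.extend hs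
  have hxm : x ∈ hs.extend (Set.subset_univ _) := hs.subset_extend _ (by simp)
  have hym : y ∈ hs.extend (Set.subset_univ _) := hs.subset_extend _ (by simp)
  have ex : b ⟨x, hxm⟩ = x := Module.Basis.extend_apply_self hs _
  have ey : b ⟨y, hym⟩ = y := Module.Basis.extend_apply_self hs _
  have rx : b.repr x = Finsupp.single ⟨x, hxm⟩ 1 :=
    (congrArg b.repr ex.symm).trans (b.repr_self _)
  have ry : b.repr y = Finsupp.single ⟨y, hym⟩ 1 :=
    (congrArg b.repr ey.symm).trans (b.repr_self _)
  refine ⟨b.coord ⟨x, hxm⟩, b.coord ⟨y, hym⟩, ?_, ?_, ?_, ?_⟩ <;>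
    show (b.repr _) _ = _
  · rw [rx]; simp
  · rw [ry, Finsupp.single_apply]; simp [Subtype.ext_iff, hne.symm]
  · rw [rx, Finsupp.single_apply]; simp [Subtype.ext_iff, hne]
  · rw [ry]; simp

lemma not_simple {V W : Type} [AddCommGroup V] [Module ℂ V]
    [AddCommGroup W] [Module ℂ W] {a b : V} {c d : W}
    (hab : LinearIndependent ℂ ![a, b]) (hcd : LinearIndependent ℂ ![c, d])
    (p : V) (q : W) : a ⊗ₜ[ℂ] c + b ⊗ₜ[ℂ] d ≠ p ⊗ₜ[ℂ] q := by
  intro heq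
  obtain ⟨f, F, hfa, hfb, hFa, hFb⟩ := dual_pair hab
  obtain ⟨g, G, hgc, hgd, hGc, hGd⟩ := dual_pair hcd
  have key : ∀ (φ : V →ₗ[ℂ] ℂ) (ψ : W →ₗ[ℂ] ℂ),
      φ a * ψ c + φ b * ψ d = φ p * ψ q := by
    intro φ ψ
    have := congrArg ((TensorProduct.lid ℂ ℂ).toLinearMap.comp (TensorProduct.map φ ψ)) heq
    simpa [smul_eq_mul] using this
  have e1 := key f g
  have e2 := key f G
  have e3 := key F g
  have e4 := key F G
  rw [hfa, hfb, hgc, hgd] at e1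
  rw [hfa, hfb, hGc, hGd] at e2
  rw [hFa, hFb, hgc, hgd] at e3
  rw [hFa, hFb, hGc, hGd] at e4
  have : (1 : ℂ) = 0 := by
    calc (1 : ℂ) = (f p * g q) * (F p * G q) := by rw [← e1, ← e4]; ring
    _ = (f p * G q) * (F p * g q) := by ring
    _ = 0 := by rw [← e2, ← e3]; ring
  exact one_ne_zero this

theorem stmt_2 {V W : Type} [AddCommGroup V] [Module ℂ V] [FiniteDimensional ℂ V]
    [AddCommGroup W] [Module ℂ W] [FiniteDimensional ℂ W]
    {X : Type} [Fintype X] (v : X → V) (w : X → W)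
    (h : ∀ c : X → ℂ, ∃ (v' : V) (w' : W),
        ∑ x : X, c x • (v x ⊗ₜ[ℂ] w x) = v' ⊗ₜ[ℂ] w') :
    (∃ v₀ : V, ∀ x : X, ∃ u : W, v x ⊗ₜ[ℂ] w x = v₀ ⊗ₜ[ℂ] u) ∨
    (∃ w₀ : W, ∀ x : X, ∃ u : V, v x ⊗ₜ[ℂ] w x = u ⊗ₜ[ℂ] w₀) := by
  classical
  by_cases hcase : ∀ x y : X, v x ⊗ₜ[ℂ] w x ≠ 0 → v y ⊗ₜ[ℂ] w y ≠ 0 →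
      ¬ LinearIndependent ℂ ![v x, v y]
  · -- all left factors pairwise dependent
    by_cases hex : ∃ a, v a ⊗ₜ[ℂ] w a ≠ 0
    · obtain ⟨a, ha⟩ := hex
      have hva : v a ≠ 0 := fun h0 => ha (by simp [h0])
      left
      refine ⟨v a, fun x => ?_⟩
      by_cases hx : v x ⊗ₜ[ℂ] w x = 0
      · exact ⟨0, by simp [hx]⟩
      · have hdep := hcase a x ha hx
        rw [LinearIndependent.pair_iff' hva] at hdep
        push_neg at hdep
        obtain ⟨c, hc⟩ := hdep
        exact ⟨c • w x, by rw [← hc, smul_tmul]⟩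
    · push_neg at hex
      exact Or.inl ⟨0, fun x => ⟨0, by simp [hex x]⟩⟩
  · push_neg at hcase
    obtain ⟨a, b, ha, hb, hab⟩ := hcase
    have hva : v a ≠ 0 := fun h0 => ha (by simp [h0])
    have hwa : w a ≠ 0 := fun h0 => ha (by simp [h0])
    have hvb : v b ≠ 0 := fun h0 => hb (by simp [h0])
    have hwb : w b ≠ 0 := fun h0 => hb (by simp [h0])
    have pairsum : ∀ x y : X, x ≠ y →
        ∃ p q, v x ⊗ₜ[ℂ] w x + v y ⊗ₜ[ℂ] w y = p ⊗ₜ[ℂ] q := by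
      intro x y hxy
      obtain ⟨p, q, hpq⟩ := h (fun z => (if z = x then 1 else 0) + (if z = y then 1 else 0))
      refine ⟨p, q, ?_⟩
      rw [← hpq]
      simp only [add_smul, ite_smul, one_smul, zero_smul, Finset.sum_add_distrib,
        Finset.sum_ite_eq', Finset.mem_univ, if_true]
    have wdep : ∀ x y : X, LinearIndependent ℂ ![v x, v y] →
        ¬ LinearIndependent ℂ ![w x, w y] := by
      intro x y hv hw
      have hxy : x ≠ y := by
        rintro rfl
        have := hv.injective (show ![v x, v x] 0 = ![v x, v x] 1 by simp)
        simp at this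
      obtain ⟨p, q, hpq⟩ := pairsum x y hxy
      exact not_simple hv hw p q hpq
    -- w b = r • w a
    have hwab := wdep a b hab
    rw [LinearIndependent.pair_iff' hwa] at hwab
    push_neg at hwab
    obtain ⟨r, hr⟩ := hwab
    right
    refine ⟨w a, fun x => ?_⟩
    by_cases hx : v x ⊗ₜ[ℂ] w x = 0
    · exact ⟨0, by simp [hx]⟩
    · have hvx : v x ≠ 0 := fun h0 => hx (by simp [h0])
      have hwx : w x ≠ 0 := fun h0 => hx (by simp [h0])
      by_cases hxa : LinearIndependent ℂ ![v a, v x]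
      · have hwd := wdep a x hxa
        rw [LinearIndependent.pair_iff' hwa] at hwd
        push_neg at hwd
        obtain ⟨s, hs⟩ := hwd
        exact ⟨s • v x, by rw [← hs, smul_tmul, tmul_smul]⟩
      · rw [LinearIndependent.pair_iff' hva] at hxa
        push_neg at hxa
        obtain ⟨t, ht⟩ := hxa
        have htne : t ≠ 0 := by
          rintro rfl
          exact hvx (by rw [← ht, zero_smul])
        have hbx : LinearIndependent ℂ ![v b, v x] := by
          rw [LinearIndependent.pair_iff' hvb]
          intro s hsv
          have : t • v a + (-s) • v b = 0 := by
            rw [← ht] at hsv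
            rw [neg_smul, hsv, ht]
            simp
          have := (LinearIndependent.pair_iff.mp hab t (-s) this).1
          exact htne this
        have hwd := wdep b x hbx
        rw [LinearIndependent.pair_iff' hwb] at hwd
        push_neg at hwd
        obtain ⟨s, hs⟩ := hwd
        refine ⟨(s * r) • v x, ?_⟩
        rw [← hs, ← hr, smul_smul, smul_tmul, tmul_smul]
end

section
/- Let F, M, H be finite nonempty types and X a finite type. Let {Π_x}_{x∈X} and {Δ_x}_{x∈X} be families of matrices in Matrix M M ℂ satisfying the duality relation trace(Π_x · Δ_y) = δ_{xy} for all x, y ∈ X. Let A : X → Matrix F F ℂ and B : X → Matrix H H ℂ, and define Υ : Matrix (F × M × H) (F × M × H) ℂ by Υ((f,m,h),(f',m',h')) = Σ_{x} A x f f' * Δ_x m m' * B x h h'. Then for any coefficients c : X → ℂ and Γ := Σ_x c x • Π_x, the conditional operator satisfies Υ_Γ = Σ_x c x • (A x ⊗ B x). -/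
open Matrix Kronecker

theorem stmt_3 {F M H : Type} [Fintype F] [Fintype M] [Fintype H]
    [Nonempty F] [Nonempty M] [Nonempty H]
    {X : Type} [Fintype X] [DecidableEq X]
    (Pi Δ : X → Matrix M M ℂ)
    (hdual : ∀ x y : X, (Pi x * Δ y).trace = if x = y then (1 : ℂ) else 0)
    (A : X → Matrix F F ℂ) (B : X → Matrix H H ℂ)
    (Υ : Matrix (F × M × H) (F × M × H) ℂ)
    (hΥ : ∀ f m h f' m' h',
      Υ (f, m, h) (f', m', h') = ∑ x : X, A x f f' * Δ x m m' * B x h h')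
    (c : X → ℂ) (Γ : Matrix M M ℂ) (hΓ : Γ = ∑ x : X, c x • Pi x) :
    condOp Υ Γ = ∑ x : X, c x • (A x ⊗ₖ B x) := by
  have hkey : ∀ x : X, (∑ m : M, ∑ m' : M, Γ m m' * Δ x m' m) = c x := by
    intro x
    have h1 : (∑ m : M, ∑ m' : M, Γ m m' * Δ x m' m) = (Γ * Δ x).trace := by
      simp [Matrix.trace, Matrix.mul_apply, Matrix.diag]
    rw [h1, hΓ, Matrix.sum_mul]
    simp only [Matrix.smul_mul, Matrix.trace_sum, Matrix.trace_smul, hdual, smul_eq_mul]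
    simp
  ext ⟨f, h⟩ ⟨f', h'⟩
  simp only [condOp, hΥ, Matrix.sum_apply, Matrix.smul_apply, Matrix.kroneckerMap_apply,
    smul_eq_mul, Finset.mul_sum]
  have swap : ∀ g : M → M → X → ℂ, (∑ m : M, ∑ m' : M, ∑ x : X, g m m' x)
      = ∑ x : X, ∑ m : M, ∑ m' : M, g m m' x := fun g =>
    (Finset.sum_congr rfl fun _ _ => Finset.sum_comm).trans Finset.sum_comm
  rw [swap]
  refine Finset.sum_congr rfl fun x _ => ?_
  have : (∑ m : M, ∑ m' : M, Γ m m' * (A x f f' * Δ x m' m * B x h h'))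
      = (∑ m : M, ∑ m' : M, Γ m m' * Δ x m' m) * (A x f f' * B x h h') := by
    simp only [Finset.sum_mul]
    exact Finset.sum_congr rfl fun m _ => Finset.sum_congr rfl fun m' _ => by ring
  rw [this, hkey x]
end

section
/- Let A, B, C be finite nonempty types and let Υ : Matrix (A × B × C) (A × B × C) ℂ be nonzero. Suppose there exist X : Matrix (A × B) (A × B) ℂ and Y : Matrix C C ℂ with Υ((a,b,c),(a',b',c')) = X (a,b) (a',b') * Y c c' for all indices, and also there exist X' : Matrix A A ℂ and Y' : Matrix (B × C) (B × C) ℂ with Υ((a,b,c),(a',b',c')) = X' a a' * Y' (b,c) (b',c') for all indices. Then there exist matrices P : Matrix A A ℂ, Q : Matrix B B ℂ, and R : Matrix C C ℂ such that Υ((a,b,c),(a',b',c')) = P a a' * Q b b' * R c c' for all indices. In words: a nonzero operator on a tripartite system that factorizes across both overlapping bipartite cuts must factorize as a full tripartite tensor product. -/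
theorem stmt_4 {A B C : Type} [Fintype A] [Fintype B] [Fintype C]
    [Nonempty A] [Nonempty B] [Nonempty C]
    (Υ : Matrix (A × B × C) (A × B × C) ℂ) (hne : Υ ≠ 0)
    (h₁ : ∃ (X : Matrix (A × B) (A × B) ℂ) (Y : Matrix C C ℂ),
      ∀ a b c a' b' c', Υ (a, b, c) (a', b', c') = X (a, b) (a', b') * Y c c')
    (h₂ : ∃ (X' : Matrix A A ℂ) (Y' : Matrix (B × C) (B × C) ℂ),
      ∀ a b c a' b' c', Υ (a, b, c) (a', b', c') = X' a a' * Y' (b, c) (b', c')) :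
    ∃ (P : Matrix A A ℂ) (Q : Matrix B B ℂ) (R : Matrix C C ℂ),
      ∀ a b c a' b' c', Υ (a, b, c) (a', b', c') = P a a' * Q b b' * R c c' := by
  obtain ⟨X, Y, hXY⟩ := h₁
  obtain ⟨X', Y', hXY'⟩ := h₂
  -- find a nonzero entry
  have : ∃ a b c a' b' c', Υ (a, b, c) (a', b', c') ≠ 0 := by
    by_contra h
    push_neg at h
    apply hne
    ext ⟨a, b, c⟩ ⟨a', b', c'⟩
    exact h a b c a' b' c'
  obtain ⟨a₀, b₀, c₀, a₀', b₀', c₀', h0⟩ := this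
  have hY : Y c₀ c₀' ≠ 0 := by
    intro h
    apply h0
    rw [hXY, h, mul_zero]
  refine ⟨X', fun b b' => Y' (b, c₀) (b', c₀') / Y c₀ c₀', Y, fun a b c a' b' c' => ?_⟩
  have key : X' a a' * Y' (b, c₀) (b', c₀') = X (a, b) (a', b') * Y c₀ c₀' := by
    rw [← hXY', hXY]
  field_simp
  rw [key, hXY a b c]; ring
end

section
/- Let n ≥ 1, let α : Fin n → Type be a family of finite nonempty types, and let Υ : Matrix ((i : Fin n) → α i) ((i : Fin n) → α i) ℂ be nonzero. Suppose that for every k with 0 < k < n there exist matrices X_k (indexed by functions on {i : Fin n // i < k}) and Y_k (indexed by functions on {i : Fin n // k ≤ i}) such that Υ f g = X_k (f restricted to {i // i < k}) (g restricted to {i // i < k}) * Y_k (f restricted to {i // k ≤ i}) (g restricted to {i // k ≤ i}) for all f, g. Then there exists a family of matrices M : (i : Fin n) → Matrix (α i) (α i) ℂ such that Υ f g = ∏_{i} M i (f i) (g i) for all f, g. In words: a multipartite operator that factorizes across every consecutive bipartite cut has the fully factorized (Markovian) product structure. -/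
private def QQ {n : ℕ} {α : Fin n → Type} (b : (i : Fin n) → α i) (k : ℕ)
    (h : (i : Fin n) → α i) : (i : Fin n) → α i :=
  fun i => if i.val < k then h i else b i

private lemma QQ_zero {n : ℕ} {α : Fin n → Type} (b h : (i : Fin n) → α i) :
    QQ b 0 h = b := by
  funext i; simp [QQ]

private lemma QQ_all {n : ℕ} {α : Fin n → Type} (b h : (i : Fin n) → α i) {k : ℕ}
    (hk : n ≤ k) : QQ b k h = h := by
  funext i; simp [QQ, lt_of_lt_of_le i.isLt hk]

private lemma QQ_pre {n : ℕ} {α : Fin n → Type} (b h : (i : Fin n) → α i) (k : ℕ) :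
    (fun j : {i : Fin n // i.val < k} => QQ b k h j.1) = fun j : {i : Fin n // i.val < k} => h j.1 := by
  funext j; simp [QQ, j.2]

private lemma QQ_pre_succ {n : ℕ} {α : Fin n → Type} (b h : (i : Fin n) → α i) (k : ℕ) :
    (fun j : {i : Fin n // i.val < k} => QQ b (k+1) h j.1) = fun j : {i : Fin n // i.val < k} => h j.1 := by
  funext j; simp [QQ, Nat.lt_succ_of_lt j.2]

private lemma QQ_suf {n : ℕ} {α : Fin n → Type} (b h : (i : Fin n) → α i) (k : ℕ) :
    (fun j : {i : Fin n // k ≤ i.val} => QQ b k h j.1) = fun j : {i : Fin n // k ≤ i.val} => b j.1 := by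
  funext j; simp [QQ, Nat.not_lt.2 j.2]

private lemma QQ_suf_succ {n : ℕ} {α : Fin n → Type} [∀ i, DecidableEq (α i)]
    (b h : (i : Fin n) → α i) {k : ℕ} (hkn : k < n) :
    (fun j : {i : Fin n // k ≤ i.val} => QQ b (k+1) h j.1)
      = fun j : {i : Fin n // k ≤ i.val} => Function.update b ⟨k, hkn⟩ (h ⟨k, hkn⟩) j.1 := by
  funext j
  by_cases hj : j.1 = ⟨k, hkn⟩
  · rw [hj]; simp [QQ]
  · have hv : j.1.val ≠ k := fun hv => hj (Fin.ext hv)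
    have h2 : ¬ j.1.val < k + 1 := by have := j.2; omega
    rw [Function.update_of_ne hj]
    simp [QQ, h2]

private lemma update_pre {n : ℕ} {α : Fin n → Type} [∀ i, DecidableEq (α i)]
    (b : (i : Fin n) → α i) {k : ℕ} (hkn : k < n) (x : α ⟨k, hkn⟩) :
    (fun j : {i : Fin n // i.val < k} => Function.update b ⟨k, hkn⟩ x j.1)
      = fun j : {i : Fin n // i.val < k} => b j.1 := by
  funext j
  have hj : j.1 ≠ ⟨k, hkn⟩ := by
    intro h; have := j.2; rw [h] at this; exact lt_irrefl _ this
  rw [Function.update_of_ne hj]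


theorem stmt_5 {n : ℕ} (hn : 1 ≤ n) (α : Fin n → Type)
    [∀ i, Fintype (α i)] [∀ i, Nonempty (α i)] [∀ i, DecidableEq (α i)]
    (Υ : Matrix ((i : Fin n) → α i) ((i : Fin n) → α i) ℂ) (hne : Υ ≠ 0)
    (hcut : ∀ k : ℕ, 0 < k → k < n →
      ∃ (X : Matrix ((j : {i : Fin n // i.val < k}) → α j.1)
                    ((j : {i : Fin n // i.val < k}) → α j.1) ℂ)
        (Y : Matrix ((j : {i : Fin n // k ≤ i.val}) → α j.1)
                    ((j : {i : Fin n // k ≤ i.val}) → α j.1) ℂ),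
        ∀ f g : (i : Fin n) → α i,
          Υ f g = X (fun j => f j.1) (fun j => g j.1)
                * Y (fun j => f j.1) (fun j => g j.1)) :
    ∃ M : (i : Fin n) → Matrix (α i) (α i) ℂ,
      ∀ f g : (i : Fin n) → α i, Υ f g = ∏ i : Fin n, M i (f i) (g i) := by
  classical
  obtain ⟨f₀, g₀, hc⟩ : ∃ f g, Υ f g ≠ 0 := by
    by_contra hcon
    push_neg at hcon
    exact hne (Matrix.ext fun f g => by simpa using hcon f g)
  have key : ∀ (f g : (i : Fin n) → α i) (k : ℕ), k ≤ n →
      Υ (QQ f₀ k f) (QQ g₀ k g) * (Υ f₀ g₀) ^ k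
        = Υ f₀ g₀ * ∏ i : Fin n, (if i.val < k then
            Υ (Function.update f₀ i (f i)) (Function.update g₀ i (g i)) else 1) := by
    intro f g k
    induction k with
    | zero => intro _; simp [QQ_zero]
    | succ k ih =>
      intro hk1
      have hkn : k < n := hk1
      have ihk := ih (le_of_lt hkn)
      have hprod : (∏ i : Fin n, (if i.val < k+1 then
            Υ (Function.update f₀ i (f i)) (Function.update g₀ i (g i)) else 1))
          = (∏ i : Fin n, (if i.val < k then
            Υ (Function.update f₀ i (f i)) (Function.update g₀ i (g i)) else 1))
            * Υ (Function.update f₀ ⟨k, hkn⟩ (f ⟨k, hkn⟩))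
                (Function.update g₀ ⟨k, hkn⟩ (g ⟨k, hkn⟩)) := by
        have hset : Finset.univ.filter (fun i : Fin n => i.val < k+1)
            = insert (⟨k, hkn⟩ : Fin n)
                (Finset.univ.filter (fun i : Fin n => i.val < k)) := by
          ext i
          simp [Fin.ext_iff]
          omega
        rw [← Finset.prod_filter, ← Finset.prod_filter, hset,
          Finset.prod_insert (by simp)]
        ring
      have hmain : Υ (QQ f₀ (k+1) f) (QQ g₀ (k+1) g) * Υ f₀ g₀
          = Υ (QQ f₀ k f) (QQ g₀ k g)
            * Υ (Function.update f₀ ⟨k, hkn⟩ (f ⟨k, hkn⟩))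
                (Function.update g₀ ⟨k, hkn⟩ (g ⟨k, hkn⟩)) := by
        rcases Nat.eq_zero_or_pos k with h0 | hpos
        · subst h0
          have h1 : QQ f₀ 1 f = Function.update f₀ ⟨0, hkn⟩ (f ⟨0, hkn⟩) := by
            funext i
            by_cases hi : i = ⟨0, hkn⟩
            · rw [hi]; simp [QQ]
            · have hv : i.val ≠ 0 := fun hv => hi (Fin.ext hv)
              rw [Function.update_of_ne hi]
              simp [QQ, Nat.lt_one_iff, hv]
          have h2 : QQ g₀ 1 g = Function.update g₀ ⟨0, hkn⟩ (g ⟨0, hkn⟩) := by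
            funext i
            by_cases hi : i = ⟨0, hkn⟩
            · rw [hi]; simp [QQ]
            · have hv : i.val ≠ 0 := fun hv => hi (Fin.ext hv)
              rw [Function.update_of_ne hi]
              simp [QQ, Nat.lt_one_iff, hv]
          rw [h1, h2, QQ_zero, QQ_zero]
          ring
        · obtain ⟨X, Y, hXY⟩ := hcut k hpos hkn
          simp only [hXY]
          rw [QQ_pre_succ, QQ_pre_succ, QQ_suf_succ f₀ f hkn, QQ_suf_succ g₀ g hkn,
            QQ_pre, QQ_pre, QQ_suf, QQ_suf, update_pre f₀ hkn, update_pre g₀ hkn]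
          ring
      rw [hprod, pow_succ]
      linear_combination (Υ f₀ g₀) ^ k * hmain
        + (Υ (Function.update f₀ ⟨k, hkn⟩ (f ⟨k, hkn⟩))
            (Function.update g₀ ⟨k, hkn⟩ (g ⟨k, hkn⟩))) * ihk
  refine ⟨fun i a b => Υ (Function.update f₀ i a) (Function.update g₀ i b)
      * (if (i : ℕ) = 0 then 1 else (Υ f₀ g₀)⁻¹), ?_⟩
  intro f g
  have hk := key f g n le_rfl
  rw [QQ_all f₀ f le_rfl, QQ_all g₀ g le_rfl] at hk
  simp only [Fin.is_lt, if_true] at hk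
  have hw : ∏ i : Fin n, (if (i : ℕ) = 0 then (1:ℂ) else (Υ f₀ g₀)⁻¹)
      = (Υ f₀ g₀)⁻¹ ^ (n - 1) := by
    rw [Finset.prod_ite, Finset.prod_const, Finset.prod_const, one_pow, one_mul]
    congr 1
    have hset : Finset.univ.filter (fun i : Fin n => ¬ (i : ℕ) = 0)
        = Finset.univ \ {(⟨0, hn⟩ : Fin n)} := by
      ext i; simp [Fin.ext_iff]
    rw [hset, Finset.card_sdiff_of_subset (by simp)]
    simp
  have hprodT : ∏ i : Fin n, (Υ (Function.update f₀ i (f i))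
      (Function.update g₀ i (g i))
      * (if (i : ℕ) = 0 then (1:ℂ) else (Υ f₀ g₀)⁻¹))
      = (∏ i : Fin n, Υ (Function.update f₀ i (f i)) (Function.update g₀ i (g i)))
        * (Υ f₀ g₀)⁻¹ ^ (n - 1) := by
    rw [Finset.prod_mul_distrib, hw]
  rw [hprodT]
  have hn1 : n - 1 + 1 = n := by omega
  have hcn : (Υ f₀ g₀) ^ n = Υ f₀ g₀ * (Υ f₀ g₀) ^ (n - 1) := by
    conv_lhs => rw [← hn1]
    rw [pow_succ]
    ring
  have hT : (∏ i : Fin n, Υ (Function.update f₀ i (f i)) (Function.update g₀ i (g i)))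
      = Υ f g * (Υ f₀ g₀) ^ (n - 1) := by
    apply mul_left_cancel₀ hc
    rw [← hk, hcn]
    ring
  rw [hT, inv_pow, mul_assoc, mul_inv_cancel₀ (pow_ne_zero _ hc), mul_one]
end

section
/- Let F, M, H be finite nonempty types, let Υ : Matrix (F × M × H) (F × M × H) ℂ be positive semidefinite, and let O : Matrix M M ℂ be positive semidefinite. For O_H : Matrix H H ℂ define T(O_H) : Matrix F F ℂ by T(O_H) f f' = Σ_{m,m',h,h'} O m m' * O_H h h' * Υ((f,m',h'),(f',m,h)) (the partial trace over M and H of (1_F ⊗ O ⊗ O_H) · Υ). Suppose there exists a matrix A : Matrix F F ℂ such that for every positive semidefinite O_H one has T(O_H) = (trace T(O_H)) • A. Then there exists a matrix B : Matrix H H ℂ such that the conditional operator satisfies Υ_O = A ⊗ B. In words: if the conditional future state is the same no matter which instrument element is applied on the history, then the conditional future–history operator is a product operator. -/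
open Matrix Kronecker ComplexOrder

/-- The conditional future operator on `F`: the partial trace over `M` and `H` of
`(1_F ⊗ O ⊗ O_H) · Υ`. -/
noncomputable def condFuture {F M H : Type} [Fintype M] [Fintype H]
    (Υ : Matrix (F × M × H) (F × M × H) ℂ) (O : Matrix M M ℂ)
    (OH : Matrix H H ℂ) : Matrix F F ℂ :=
  fun f f' => ∑ m : M, ∑ m' : M, ∑ h : H, ∑ h' : H,
    O m m' * OH h h' * Υ (f, m', h') (f', m, h)

/-- Rank-one matrices `v v*` are positive semidefinite. -/
lemma aux_posSemidef_vecMulVec {H : Type} [Fintype H] [DecidableEq H] (v : H → ℂ) :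
    (vecMulVec v (star v)).PosSemidef := by
  refine Matrix.PosSemidef.of_dotProduct_mulVec_nonneg ?_ ?_
  · ext p q
    simp [vecMulVec, conjTranspose_apply, mul_comm]
  · intro x
    have : star x ⬝ᵥ (vecMulVec v (star v)) *ᵥ x
        = star (star v ⬝ᵥ x) * (star v ⬝ᵥ x) := by
      simp [dotProduct, mulVec, vecMulVec, Finset.mul_sum, Finset.sum_mul]
      rw [Finset.sum_comm]
      refine Finset.sum_congr rfl fun i _ => Finset.sum_congr rfl fun j _ => by ring
    rw [this]
    exact star_mul_self_nonneg _

lemma aux_cf_add {F M H : Type} [Fintype M] [Fintype H]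
    (Υ : Matrix (F × M × H) (F × M × H) ℂ) (O : Matrix M M ℂ)
    (X Y : Matrix H H ℂ) :
    condFuture Υ O (X + Y) = condFuture Υ O X + condFuture Υ O Y := by
  funext f f'
  simp [condFuture, Matrix.add_apply, mul_add, add_mul, Finset.sum_add_distrib]

lemma aux_cf_sub {F M H : Type} [Fintype M] [Fintype H]
    (Υ : Matrix (F × M × H) (F × M × H) ℂ) (O : Matrix M M ℂ)
    (X Y : Matrix H H ℂ) :
    condFuture Υ O (X - Y) = condFuture Υ O X - condFuture Υ O Y := by
  funext f f'
  simp [condFuture, Matrix.sub_apply, mul_sub, sub_mul, Finset.sum_sub_distrib]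

lemma aux_cf_smul {F M H : Type} [Fintype M] [Fintype H]
    (Υ : Matrix (F × M × H) (F × M × H) ℂ) (O : Matrix M M ℂ)
    (c : ℂ) (X : Matrix H H ℂ) :
    condFuture Υ O (c • X) = c • condFuture Υ O X := by
  funext f f'
  simp only [condFuture, Matrix.smul_apply, smul_eq_mul, Finset.mul_sum]
  refine Finset.sum_congr rfl fun m _ => Finset.sum_congr rfl fun m' _ =>
    Finset.sum_congr rfl fun a _ => Finset.sum_congr rfl fun b _ => by ring

/-- Polarization identity for rank-one matrices. -/
lemma aux_polarization {H : Type} (x y : H → ℂ) :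
    (4 : ℂ) • vecMulVec x (star y) =
      vecMulVec (x + y) (star (x + y))
      + Complex.I • vecMulVec (x + Complex.I • y) (star (x + Complex.I • y))
      - vecMulVec (x - y) (star (x - y))
      - Complex.I • vecMulVec (x - Complex.I • y) (star (x - Complex.I • y)) := by
  funext p q
  simp only [Matrix.sub_apply, Matrix.add_apply, Matrix.smul_apply, vecMulVec_apply,
    Pi.add_apply, Pi.sub_apply, Pi.smul_apply, Pi.star_apply, smul_eq_mul,
    star_add, star_sub, star_mul', Complex.star_def, Complex.conj_I]
  ring_nf
  simp [Complex.I_sq]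
  ring

theorem stmt_6 {F M H : Type} [Fintype F] [Fintype M] [Fintype H]
    [Nonempty F] [Nonempty M] [Nonempty H]
    (Υ : Matrix (F × M × H) (F × M × H) ℂ) (hΥ : Υ.PosSemidef)
    (O : Matrix M M ℂ) (hO : O.PosSemidef)
    (A : Matrix F F ℂ)
    (hA : ∀ OH : Matrix H H ℂ, OH.PosSemidef →
      condFuture Υ O OH = (condFuture Υ O OH).trace • A) :
    ∃ B : Matrix H H ℂ, condOp Υ O = A ⊗ₖ B := by
  classical
  -- the hypothesis extends from PSD matrices to all `vecMulVec x (star y)` by polarization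
  have hzero : ∀ x y : H → ℂ,
      condFuture Υ O (vecMulVec x (star y))
        = (condFuture Υ O (vecMulVec x (star y))).trace • A := by
    intro x y
    set V := vecMulVec x (star y) with hV
    set W1 := vecMulVec (x + y) (star (x + y)) with hW1
    set W2 := vecMulVec (x + Complex.I • y) (star (x + Complex.I • y)) with hW2
    set W3 := vecMulVec (x - y) (star (x - y)) with hW3
    set W4 := vecMulVec (x - Complex.I • y) (star (x - Complex.I • y)) with hW4
    have hpol : (4 : ℂ) • V = W1 + Complex.I • W2 - W3 - Complex.I • W4 :=
      aux_polarization x y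
    have h1 := hA W1 (aux_posSemidef_vecMulVec _)
    have h2 := hA W2 (aux_posSemidef_vecMulVec _)
    have h3 := hA W3 (aux_posSemidef_vecMulVec _)
    have h4 := hA W4 (aux_posSemidef_vecMulVec _)
    have hlin : condFuture Υ O ((4 : ℂ) • V)
        = condFuture Υ O W1 + Complex.I • condFuture Υ O W2
          - condFuture Υ O W3 - Complex.I • condFuture Υ O W4 := by
      rw [hpol, aux_cf_sub, aux_cf_sub, aux_cf_add, aux_cf_smul, aux_cf_smul]
    have key : (4 : ℂ) • condFuture Υ O V
        = ((4 : ℂ) * (condFuture Υ O V).trace) • A := by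
      have htr : (condFuture Υ O W1).trace + Complex.I * (condFuture Υ O W2).trace
          - (condFuture Υ O W3).trace - Complex.I * (condFuture Υ O W4).trace
          = (4 : ℂ) * (condFuture Υ O V).trace := by
        have := congrArg Matrix.trace hlin
        rw [aux_cf_smul] at this
        simpa [Matrix.trace_add, Matrix.trace_sub, Matrix.trace_smul, smul_eq_mul] using
          this.symm
      calc (4 : ℂ) • condFuture Υ O V = condFuture Υ O ((4 : ℂ) • V) :=
            (aux_cf_smul Υ O 4 V).symm
        _ = condFuture Υ O W1 + Complex.I • condFuture Υ O W2
            - condFuture Υ O W3 - Complex.I • condFuture Υ O W4 := hlin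
        _ = ((condFuture Υ O W1).trace + Complex.I * (condFuture Υ O W2).trace
            - (condFuture Υ O W3).trace - Complex.I * (condFuture Υ O W4).trace) • A := by
            conv_lhs => rw [h1, h2, h3, h4]
            module
        _ = ((4 : ℂ) * (condFuture Υ O V).trace) • A := by rw [htr]
    have h4ne : (4 : ℂ) ≠ 0 := by norm_num
    have := key
    rw [mul_smul] at this
    exact smul_right_injective _ h4ne this
  -- define B via traces of conditional futures of matrix units
  refine ⟨fun h h' =>
    (condFuture Υ O (vecMulVec (Pi.single h' (1 : ℂ)) (star (Pi.single h (1 : ℂ))))).trace,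
    ?_⟩
  ext ⟨f, h⟩ ⟨f', h'⟩
  have ecf : ∀ g g' : F,
      condFuture Υ O (vecMulVec (Pi.single h' (1 : ℂ)) (star (Pi.single h (1 : ℂ)))) g g'
        = condOp Υ O (g, h) (g', h') := by
    intro g g'
    simp [condFuture, condOp, vecMulVec_apply, Pi.single_apply, mul_ite, ite_mul,
      mul_zero, zero_mul, mul_one, one_mul, Finset.sum_ite_eq, Finset.sum_ite_eq']
  have hz := hzero (Pi.single h' (1 : ℂ)) (Pi.single h (1 : ℂ))
  have := congrFun (congrFun hz f) f'
  rw [ecf f f'] at this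
  change condOp Υ O (f, h) (f', h') = A f f' *
    (condFuture Υ O (vecMulVec (Pi.single h' (1 : ℂ)) (star (Pi.single h (1 : ℂ))))).trace
  rw [this]
  simp [mul_comm]
end

section
/- Let σ₁, σ₂, σ₃ be the Pauli matrices in Matrix (Fin 2) (Fin 2) ℂ, let c^(1) = (1,1,1), c^(2) = (1,-1,-1), c^(3) = (-1,1,-1), c^(4) = (-1,-1,1), and define Π^(b) := (1/4)(1 + (1/√3) Σ_i c_i^(b) σ_i), Δ^(b) := (1/2)(1 + √3 Σ_i c_i^(b) σ_i), ρ^(b) := (3/8)·1 + (1/2)·Π^(b), and ρ := (1/4) Σ_{b=1}^{4} ρ^(b) ⊗ Δ^(b) ⊗ ρ^(b) on Matrix (Fin 2 × Fin 2 × Fin 2) (Fin 2 × Fin 2 × Fin 2) ℂ. Then for each b ∈ {1,2,3,4}, the conditional operator of ρ with respect to the POVM element Π^(b) on the middle factor is the product operator ρ_{Π^(b)} = (1/4) • (ρ^(b) ⊗ ρ^(b)); i.e., conditioned on any outcome of the tetrahedral POVM applied to the middle system, the first and third systems are in a conditional product state, so the process has finite Markov order with respect to this instrument. -/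
open Matrix Kronecker ComplexOrder Complex

/-- The three Pauli matrices. -/
noncomputable def pauli : Fin 3 → Matrix (Fin 2) (Fin 2) ℂ :=
  ![!![0, 1; 1, 0], !![0, -I; I, 0], !![1, 0; 0, -1]]

/-- The four tetrahedral coefficient vectors. -/
def tetra : Fin 4 → Fin 3 → ℝ :=
  ![![1, 1, 1], ![1, -1, -1], ![-1, 1, -1], ![-1, -1, 1]]

/-- The tetrahedral POVM elements `Π^(b) = (1/4)(1 + (1/√3) Σᵢ cᵢ^(b) σᵢ)`. -/
noncomputable def tetraPOVM (b : Fin 4) : Matrix (Fin 2) (Fin 2) ℂ :=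
  (1 / 4 : ℂ) • ((1 : Matrix (Fin 2) (Fin 2) ℂ)
    + ((Real.sqrt 3 : ℂ))⁻¹ • ∑ i : Fin 3, (tetra b i : ℂ) • pauli i)

/-- The dual operators `Δ^(b) = (1/2)(1 + √3 Σᵢ cᵢ^(b) σᵢ)`. -/
noncomputable def tetraDual (b : Fin 4) : Matrix (Fin 2) (Fin 2) ℂ :=
  (1 / 2 : ℂ) • ((1 : Matrix (Fin 2) (Fin 2) ℂ)
    + (Real.sqrt 3 : ℂ) • ∑ i : Fin 3, (tetra b i : ℂ) • pauli i)

/-- The states `ρ^(b) = (3/8)·1 + (1/2)·Π^(b)`. -/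
noncomputable def tetraState (b : Fin 4) : Matrix (Fin 2) (Fin 2) ℂ :=
  (3 / 8 : ℂ) • (1 : Matrix (Fin 2) (Fin 2) ℂ) + (1 / 2 : ℂ) • tetraPOVM b

/-- The three-qubit process operator `ρ = (1/4) Σ_b ρ^(b) ⊗ Δ^(b) ⊗ ρ^(b)`. -/
noncomputable def tripartite : Matrix (Fin 2 × Fin 2 × Fin 2) (Fin 2 × Fin 2 × Fin 2) ℂ :=
  (1 / 4 : ℂ) • ∑ b : Fin 4, tetraState b ⊗ₖ (tetraDual b ⊗ₖ tetraState b)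

/-- The Pauli-sum part of the tetrahedral operators. -/
noncomputable def Sm (b : Fin 4) : Matrix (Fin 2) (Fin 2) ℂ :=
  ∑ i : Fin 3, (tetra b i : ℂ) • pauli i

lemma Sm_eq (b : Fin 4) : Sm b =
    !![(tetra b 2 : ℂ), (tetra b 0 : ℂ) - (tetra b 1 : ℂ) * I;
       (tetra b 0 : ℂ) + (tetra b 1 : ℂ) * I, -(tetra b 2 : ℂ)] := by
  ext i j
  fin_cases i <;> fin_cases j <;> simp [Sm, pauli, Fin.sum_univ_succ] <;> ring

lemma trace_form (c d : Fin 3 → ℂ) :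
    Matrix.trace (((1 / 4 : ℂ) • ((1 : Matrix (Fin 2) (Fin 2) ℂ)
        + ((Real.sqrt 3 : ℂ))⁻¹ • !![c 2, c 0 - c 1 * I; c 0 + c 1 * I, -(c 2)]))
      * ((1 / 2 : ℂ) • ((1 : Matrix (Fin 2) (Fin 2) ℂ)
        + (Real.sqrt 3 : ℂ) • !![d 2, d 0 - d 1 * I; d 0 + d 1 * I, -(d 2)])))
      = (1 / 4 : ℂ) * (1 + (c 0 * d 0 + c 1 * d 1 + c 2 * d 2)) := by
  have hne : (Real.sqrt 3 : ℂ) ≠ 0 := fun h => by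
    have := Real.sqrt_ne_zero'.mpr (by norm_num : (0:ℝ) < 3)
    exact this (by exact_mod_cast h)
  simp [Matrix.trace_fin_two, Matrix.mul_apply, Fin.sum_univ_two, Matrix.one_apply]
  field_simp
  ring_nf
  simp [Complex.I_sq]

lemma trace_povm_dual (b b' : Fin 4) :
    Matrix.trace (tetraPOVM b * tetraDual b') = if b = b' then 1 else 0 := by
  have key : Matrix.trace (tetraPOVM b * tetraDual b')
      = (1 / 4 : ℂ) * (1 + ((tetra b 0 : ℂ) * (tetra b' 0 : ℂ)
          + (tetra b 1 : ℂ) * (tetra b' 1 : ℂ) + (tetra b 2 : ℂ) * (tetra b' 2 : ℂ))) := by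
    have hb : tetraPOVM b = (1 / 4 : ℂ) • ((1 : Matrix (Fin 2) (Fin 2) ℂ)
        + ((Real.sqrt 3 : ℂ))⁻¹ • Sm b) := rfl
    have hb' : tetraDual b' = (1 / 2 : ℂ) • ((1 : Matrix (Fin 2) (Fin 2) ℂ)
        + (Real.sqrt 3 : ℂ) • Sm b') := rfl
    rw [hb, hb', Sm_eq, Sm_eq]
    exact trace_form (fun i => (tetra b i : ℂ)) (fun i => (tetra b' i : ℂ))
  rw [key]
  fin_cases b <;> fin_cases b' <;> norm_num [tetra, Fin.ext_iff, Matrix.cons_val, Matrix.cons_val_two, Matrix.tail_cons,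
    Matrix.head_cons]

lemma condOp_kron {F M H : Type} [Fintype F] [Fintype M] [Fintype H]
    (A : Matrix F F ℂ) (B : Matrix M M ℂ) (C : Matrix H H ℂ) (O : Matrix M M ℂ) :
    condOp (A ⊗ₖ (B ⊗ₖ C)) O = Matrix.trace (O * B) • (A ⊗ₖ C) := by
  ext ⟨f, h⟩ ⟨f', h'⟩
  simp only [condOp, kroneckerMap_apply, Matrix.trace, Matrix.diag, mul_apply,
    Matrix.smul_apply, smul_eq_mul, Finset.sum_mul]
  refine Finset.sum_congr rfl fun m _ => Finset.sum_congr rfl fun m' _ => by ring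

lemma condOp_smul {F M H : Type} [Fintype M]
    (c : ℂ) (Υ : Matrix (F × M × H) (F × M × H) ℂ) (O : Matrix M M ℂ) :
    condOp (c • Υ) O = c • condOp Υ O := by
  ext p q
  simp only [condOp, Matrix.smul_apply, smul_eq_mul, Finset.mul_sum]
  refine Finset.sum_congr rfl fun m _ => Finset.sum_congr rfl fun m' _ => by ring

lemma condOp_sum {F M H : Type} [Fintype M] {ι : Type} (s : Finset ι)
    (Υ : ι → Matrix (F × M × H) (F × M × H) ℂ) (O : Matrix M M ℂ) :
    condOp (∑ i ∈ s, Υ i) O = ∑ i ∈ s, condOp (Υ i) O := by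
  classical
  induction s using Finset.induction_on with
  | empty =>
      ext p q
      simp [condOp]
  | insert a s hnot ih =>
      rw [Finset.sum_insert hnot, Finset.sum_insert hnot, ← ih]
      ext p q
      simp [condOp, Matrix.add_apply, mul_add, Finset.sum_add_distrib]

theorem stmt_13 (b : Fin 4) :
    condOp tripartite (tetraPOVM b)
      = (1 / 4 : ℂ) • (tetraState b ⊗ₖ tetraState b) := by
  rw [tripartite, condOp_smul, condOp_sum]
  simp only [condOp_kron, trace_povm_dual]
  rw [Fintype.sum_eq_single b (fun b' hb' => by simp [if_neg (Ne.symm hb')])]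
  simp
end

section
/- Let σ₁, σ₂, σ₃ be the Pauli matrices in Matrix (Fin 2) (Fin 2) ℂ, let c^(1) = (1,1,1), c^(2) = (1,-1,-1), c^(3) = (-1,1,-1), c^(4) = (-1,-1,1), and define Π^(b) := (1/4)(1 + (1/√3) Σ_i c_i^(b) σ_i), Δ^(b) := (1/2)(1 + √3 Σ_i c_i^(b) σ_i), ρ^(b) := (3/8)·1 + (1/2)·Π^(b), and ρ := (1/4) Σ_{b=1}^{4} ρ^(b) ⊗ Δ^(b) ⊗ ρ^(b) on Matrix (Fin 2 × Fin 2 × Fin 2) (Fin 2 × Fin 2 × Fin 2) ℂ. Then ρ does not factorize across either bipartite cut: there do not exist matrices X : Matrix (Fin 2) (Fin 2) ℂ and Y : Matrix (Fin 2 × Fin 2) (Fin 2 × Fin 2) ℂ with ρ((a,b,c),(a',b',c')) = X a a' * Y (b,c) (b',c') for all indices, and there do not exist matrices X' : Matrix (Fin 2 × Fin 2) (Fin 2 × Fin 2) ℂ and Y' : Matrix (Fin 2) (Fin 2) ℂ with ρ((a,b,c),(a',b',c')) = X' (a,b) (a',b') * Y' c c' for all indices. In particular, the middle system is correlated with both the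 first and third systems, so ρ cannot have finite Markov order with respect to all possible instruments. -/
open Matrix Kronecker ComplexOrder Complex

section aux

private lemma hs3 : (Real.sqrt 3 : ℂ) * (Real.sqrt 3 : ℂ) = 3 := by
  norm_cast
  exact Real.mul_self_sqrt (by norm_num)

private lemma hs3ne : (Real.sqrt 3 : ℂ) ≠ 0 :=
  Complex.ofReal_ne_zero.mpr (by positivity)

private lemma entry000 : tripartite (0,0,0) (0,0,0) = 73/384 := by
  simp [tripartite, tetraState, tetraPOVM, tetraDual, tetra, pauli,
    Fin.sum_univ_four, Fin.sum_univ_three, Matrix.kroneckerMap_apply,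
    Matrix.smul_apply, Matrix.add_apply, Matrix.one_apply]
  field_simp
  ring_nf
  rw [show ((Real.sqrt 3:ℂ))^2 = 3 by rw [sq, hs3]]
  ring

private lemma entry111 : tripartite (1,1,1) (1,1,1) = 73/384 := by
  simp [tripartite, tetraState, tetraPOVM, tetraDual, tetra, pauli,
    Fin.sum_univ_four, Fin.sum_univ_three, Matrix.kroneckerMap_apply,
    Matrix.smul_apply, Matrix.add_apply, Matrix.one_apply]
  field_simp
  ring_nf
  rw [show ((Real.sqrt 3:ℂ))^2 = 3 by rw [sq, hs3]]
  ring

private lemma entry011 : tripartite (0,1,1) (0,1,1) = 47/384 := by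
  simp [tripartite, tetraState, tetraPOVM, tetraDual, tetra, pauli,
    Fin.sum_univ_four, Fin.sum_univ_three, Matrix.kroneckerMap_apply,
    Matrix.smul_apply, Matrix.add_apply, Matrix.one_apply]
  field_simp
  ring_nf
  rw [show ((Real.sqrt 3:ℂ))^2 = 3 by rw [sq, hs3]]
  ring

private lemma entry100 : tripartite (1,0,0) (1,0,0) = 47/384 := by
  simp [tripartite, tetraState, tetraPOVM, tetraDual, tetra, pauli,
    Fin.sum_univ_four, Fin.sum_univ_three, Matrix.kroneckerMap_apply,
    Matrix.smul_apply, Matrix.add_apply, Matrix.one_apply]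
  field_simp
  ring_nf
  rw [show ((Real.sqrt 3:ℂ))^2 = 3 by rw [sq, hs3]]
  ring

private lemma entry001 : tripartite (0,0,1) (0,0,1) = 47/384 := by
  simp [tripartite, tetraState, tetraPOVM, tetraDual, tetra, pauli,
    Fin.sum_univ_four, Fin.sum_univ_three, Matrix.kroneckerMap_apply,
    Matrix.smul_apply, Matrix.add_apply, Matrix.one_apply]
  field_simp
  ring_nf
  rw [show ((Real.sqrt 3:ℂ))^2 = 3 by rw [sq, hs3]]
  ring

private lemma entry110 : tripartite (1,1,0) (1,1,0) = 47/384 := by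
  simp [tripartite, tetraState, tetraPOVM, tetraDual, tetra, pauli,
    Fin.sum_univ_four, Fin.sum_univ_three, Matrix.kroneckerMap_apply,
    Matrix.smul_apply, Matrix.add_apply, Matrix.one_apply]
  field_simp
  ring_nf
  rw [show ((Real.sqrt 3:ℂ))^2 = 3 by rw [sq, hs3]]
  ring

end aux

theorem stmt_14 :
    (¬ ∃ (X : Matrix (Fin 2) (Fin 2) ℂ)
         (Y : Matrix (Fin 2 × Fin 2) (Fin 2 × Fin 2) ℂ),
        ∀ a b c a' b' c', tripartite (a, b, c) (a', b', c')
          = X a a' * Y (b, c) (b', c')) ∧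
    (¬ ∃ (X' : Matrix (Fin 2 × Fin 2) (Fin 2 × Fin 2) ℂ)
         (Y' : Matrix (Fin 2) (Fin 2) ℂ),
        ∀ a b c a' b' c', tripartite (a, b, c) (a', b', c')
          = X' (a, b) (a', b') * Y' c c') := by
  constructor
  · rintro ⟨X, Y, h⟩
    have h1 := h 0 0 0 0 0 0
    have h2 := h 1 1 1 1 1 1
    have h3 := h 0 1 1 0 1 1
    have h4 := h 1 0 0 1 0 0
    rw [entry000] at h1
    rw [entry111] at h2
    rw [entry011] at h3
    rw [entry100] at h4
    have key : X 0 0 * Y (0,0) (0,0) * (X 1 1 * Y (1,1) (1,1))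
        = X 0 0 * Y (1,1) (1,1) * (X 1 1 * Y (0,0) (0,0)) := by ring
    rw [← h1, ← h2, ← h3, ← h4] at key
    norm_num at key
  · rintro ⟨X, Y, h⟩
    have h1 := h 0 0 0 0 0 0
    have h2 := h 1 1 1 1 1 1
    have h3 := h 0 0 1 0 0 1
    have h4 := h 1 1 0 1 1 0
    rw [entry000] at h1
    rw [entry111] at h2
    rw [entry001] at h3
    rw [entry110] at h4
    have key : X (0,0) (0,0) * Y 0 0 * (X (1,1) (1,1) * Y 1 1)
        = X (0,0) (0,0) * Y 1 1 * (X (1,1) (1,1) * Y 0 0) := by ring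
    rw [← h1, ← h2, ← h3, ← h4] at key
    norm_num at key
end
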